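/- In the affine-function CRC, where the reactions affecting these species are X_i → C_{i,1} + ... (producing C_{i,1}) and C_{i,p} + C_{i,q} → C_{i,p+q} if p+q ≤ c_i, or C_{i,c_i} + (p+q-c_i)X_i' if p+q > c_i, for every configuration c bireachable from a valid initial configuration i with i(X_i) = x_i ≥ c_i, one has I_{c,i}(c) := c(X_i) + Σ_{p=1}^{c_i} p·c(C_{i,p}) ≥ c_i. -/
import Mathlib


/-- Species of (one input branch of) the affine CRC: the input `X`, the
accumulators `C p`, the converted input `X'`, and other species of the CRC. -/
inductive ASp : Type
  | X : ASp
  | C : ℕ → ASp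
  | X' : ASp
  | other : ℕ → ASp
  deriving DecidableEq

open ASp

def single (s : ASp) : ASp → ℕ := fun t => if t = s then 1 else 0

/-- Products of the reaction `C_p + C_q → ...` (clipped at `ci`). -/
def combine (ci p q : ℕ) : ASp → ℕ :=
  if p + q ≤ ci then single (C (p + q))
  else fun l => single (C ci) l + (p + q - ci) * single X' l

/-- The reactions affecting `X` and the `C p`:
`X → C 1 + (other species)`, and `C p + C q → C (p+q)` if `p+q ≤ ci`, else
`C ci + (p+q−ci) X'`; plus other reactions of the CRC touching neither `X`
nor any `C p`. -/
def RA (ci : ℕ) (oth : ASp → ℕ) (Rother : Set ((ASp → ℕ) × (ASp → ℕ))) :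
    Set ((ASp → ℕ) × (ASp → ℕ)) :=
  {r | r = (single X, fun l => single (C 1) l + oth l) ∨
       (∃ p q : ℕ, 1 ≤ p ∧ p ≤ ci ∧ 1 ≤ q ∧ q ≤ ci ∧
          r = (fun l => single (C p) l + single (C q) l, combine ci p q)) ∨
       r ∈ Rother}

def BiStep (R : Set ((ASp → ℕ) × (ASp → ℕ))) (x y : ASp → ℕ) : Prop :=
  ∃ r ∈ R, ((∀ l, r.1 l ≤ x l) ∧ y = fun l => x l - r.1 l + r.2 l) ∨
           ((∀ l, r.2 l ≤ x l) ∧ y = fun l => x l - r.2 l + r.1 l)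

def Sv (ci : ℕ) (f : ASp → ℕ) : ℕ := f X + ∑ p ∈ Finset.Icc 1 ci, p * f (C p)

lemma Sv_step (ci : ℕ) (x a b : ASp → ℕ) (h : ∀ l, a l ≤ x l) :
    Sv ci (fun l => x l - a l + b l) + Sv ci a = Sv ci x + Sv ci b := by
  simp only [Sv]
  have key : ∑ p ∈ Finset.Icc 1 ci, p * (x (C p) - a (C p) + b (C p))
      + ∑ p ∈ Finset.Icc 1 ci, p * a (C p)
      = ∑ p ∈ Finset.Icc 1 ci, p * x (C p) + ∑ p ∈ Finset.Icc 1 ci, p * b (C p) := by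
    rw [← Finset.sum_add_distrib, ← Finset.sum_add_distrib]
    refine Finset.sum_congr rfl fun p _ => ?_
    have hp := h (C p)
    rw [← mul_add, ← mul_add]
    congr 1
    omega
  have hx := h X
  omega

lemma Sv_add (ci : ℕ) (f g : ASp → ℕ) :
    Sv ci (fun l => f l + g l) = Sv ci f + Sv ci g := by
  simp [Sv, mul_add, Finset.sum_add_distrib]
  ring

lemma Sv_mono (ci : ℕ) {f g : ASp → ℕ} (h : ∀ l, f l ≤ g l) : Sv ci f ≤ Sv ci g :=
  Nat.add_le_add (h X) (Finset.sum_le_sum fun p _ => Nat.mul_le_mul_left p (h (C p)))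

lemma Sv_singleX (ci : ℕ) : Sv ci (single X) = 1 := by
  simp [Sv, single]

lemma Sv_singleC (ci q : ℕ) (h1 : 1 ≤ q) (h2 : q ≤ ci) : Sv ci (single (C q)) = q := by
  simp [Sv, single, mul_ite, Finset.sum_ite_eq', Finset.mem_Icc, h1, h2]

lemma Sv_combine_le (ci p q : ℕ) (h : p + q ≤ ci) (h1 : 1 ≤ p) (h2 : 1 ≤ q) :
    Sv ci (combine ci p q) = p + q := by
  rw [combine, if_pos h, Sv_singleC ci (p + q) (by omega) h]

lemma Sv_combine_gt (ci p q : ℕ) (hci : 1 ≤ ci) (h : ci < p + q) :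
    Sv ci (combine ci p q) = ci := by
  rw [combine, if_neg (by omega)]
  have : Sv ci (fun l => single (C ci) l + (p + q - ci) * single X' l)
      = Sv ci (single (C ci)) + Sv ci (fun l => (p + q - ci) * single X' l) :=
    Sv_add ci _ _
  rw [this, Sv_singleC ci ci hci le_rfl]
  have : Sv ci (fun l => (p + q - ci) * single X' l) = 0 := by
    simp [Sv, single]
  omega

lemma Sv_pair (ci p q : ℕ) (hp1 : 1 ≤ p) (hp2 : p ≤ ci) (hq1 : 1 ≤ q) (hq2 : q ≤ ci) :
    Sv ci (fun l => single (C p) l + single (C q) l) = p + q := by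
  rw [Sv_add, Sv_singleC ci p hp1 hp2, Sv_singleC ci q hq1 hq2]

lemma step_preserve (ci : ℕ) (hci : 1 ≤ ci) (oth : ASp → ℕ)
    (hothX : oth X = 0) (hothC : ∀ p, oth (C p) = 0)
    (Rother : Set ((ASp → ℕ) × (ASp → ℕ)))
    (hother : ∀ r ∈ Rother, r.1 X = 0 ∧ r.2 X = 0 ∧ ∀ p, r.1 (C p) = 0 ∧ r.2 (C p) = 0)
    (x y : ASp → ℕ) (hx : ci ≤ Sv ci x)
    (hstep : BiStep (RA ci oth Rother) x y) : ci ≤ Sv ci y := by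
  obtain ⟨r, hr, hc⟩ := hstep
  have hb1 : Sv ci (fun l => single (C 1) l + oth l) = 1 := by
    rw [Sv_add, Sv_singleC ci 1 le_rfl hci]
    have : Sv ci oth = 0 := by simp [Sv, hothX, hothC]
    omega
  rcases hr with h1 | ⟨p, q, hp1, hp2, hq1, hq2, h2⟩ | h3
  · subst h1
    rcases hc with ⟨hle, hy⟩ | ⟨hle, hy⟩ <;> subst hy
    · have key := Sv_step ci x (single X) (fun l => single (C 1) l + oth l) hle
      beta_reduce at key
      rw [Sv_singleX, hb1] at key
      have goal' : ci ≤ Sv ci (fun l => x l - single X l + (single (C 1) l + oth l)) := by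
        omega
      exact goal'
    · have key := Sv_step ci x (fun l => single (C 1) l + oth l) (single X) hle
      beta_reduce at key
      rw [Sv_singleX, hb1] at key
      have goal' : ci ≤ Sv ci (fun l => x l - (single (C 1) l + oth l) + single X l) := by
        omega
      exact goal'
  · subst h2
    rcases hc with ⟨hle, hy⟩ | ⟨hle, hy⟩ <;> subst hy
    · have key := Sv_step ci x (fun l => single (C p) l + single (C q) l)
        (combine ci p q) hle
      beta_reduce at key
      rw [Sv_pair ci p q hp1 hp2 hq1 hq2] at key
      have hmono : p + q ≤ Sv ci x := by
        have := Sv_mono ci hle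
        rwa [Sv_pair ci p q hp1 hp2 hq1 hq2] at this
      have goal' : ci ≤ Sv ci
          (fun l => x l - (single (C p) l + single (C q) l) + combine ci p q l) := by
        by_cases h : p + q ≤ ci
        · rw [Sv_combine_le ci p q h hp1 hq1] at key; omega
        · rw [Sv_combine_gt ci p q hci (by omega)] at key; omega
      exact goal'
    · have key := Sv_step ci x (combine ci p q)
        (fun l => single (C p) l + single (C q) l) hle
      beta_reduce at key
      rw [Sv_pair ci p q hp1 hp2 hq1 hq2] at key
      have goal' : ci ≤ Sv ci
          (fun l => x l - combine ci p q l + (single (C p) l + single (C q) l)) := by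
        by_cases h : p + q ≤ ci
        · rw [Sv_combine_le ci p q h hp1 hq1] at key; omega
        · rw [Sv_combine_gt ci p q hci (by omega)] at key; omega
      exact goal'
  · obtain ⟨e1, e2, e3⟩ := hother r h3
    have hz1 : Sv ci r.1 = 0 := by
      simp [Sv, e1, fun p => (e3 p).1]
    have hz2 : Sv ci r.2 = 0 := by
      simp [Sv, e2, fun p => (e3 p).2]
    rcases hc with ⟨hle, hy⟩ | ⟨hle, hy⟩ <;> subst hy
    · have := Sv_step ci x r.1 r.2 hle
      rw [hz1, hz2] at this; omega
    · have := Sv_step ci x r.2 r.1 hle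
      rw [hz1, hz2] at this; omega

/-- along every bi-execution from a valid initial configuration
with `x_i ≥ c_i` input molecules, the quantity
`I(c) = c(X) + Σ_{p=1}^{ci} p·c(C_p)` stays at least `ci`. -/
theorem affine_quantity_bound (ci : ℕ) (hci : 1 ≤ ci)
    (oth : ASp → ℕ) (hothX : oth X = 0) (hothX' : oth X' = 0)
    (hothC : ∀ p : ℕ, oth (C p) = 0)
    (Rother : Set ((ASp → ℕ) × (ASp → ℕ)))
    (hother : ∀ r ∈ Rother, r.1 X = 0 ∧ r.2 X = 0 ∧ ∀ p : ℕ, r.1 (C p) = 0 ∧ r.2 (C p) = 0)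
    (xi : ℕ) (hx : ci ≤ xi)
    (i : ASp → ℕ) (hiX : i X = xi) (hi0 : ∀ s : ASp, s ≠ X → i s = 0)
    (c : ASp → ℕ)
    (hreach : Relation.ReflTransGen (BiStep (RA ci oth Rother)) i c) :
    ci ≤ c X + ∑ p ∈ Finset.Icc 1 ci, p * c (C p) := by
  have : ci ≤ Sv ci c := by
    induction hreach with
    | refl =>
      have hC : ∀ p : ℕ, i (C p) = 0 := fun p => hi0 (C p) (by simp)
      simp [Sv, hiX, hC]
      omega
    | tail hsteps hstep ih =>
      exact step_preserve ci hci oth hothX hothC Rother hother _ _ ih hstep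
  exact this
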